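/- arXiv:2403.08623 — 2 statements merged into one kernel-verified Lean document; each statement's English description precedes it below -/
import Mathlib

section
/- For every m ∈ ℕ, let V be the number of 3-element subsets of the vertex set of Θ'_m, let E be the number of pairs (e, S) where e is an edge of Θ'_m and S is a 2-element set of vertices each disjoint from e, and let F be the number of pairs (P, v) where P is an unordered pair of disjoint edges of Θ'_m and v is a vertex disjoint from both edges of P. Then 6·(V − E + F) = m·(m−2)·(m−7) as integers. (These are the cell counts of the cube complex Conf^□_3(Θ'_m), so this computes its Euler characteristic χ = m(m−2)(m−7)/6.) -/
/-- The once-subdivided generalized theta graph `Θ'_m`: vertices `{a₁,a₂} ⊕ Fin m`,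
with edges exactly `{aⱼ, bᵢ}`, i.e. the complete bipartite graph `K_{2,m}`. -/
def thetaSub (m : ℕ) : SimpleGraph (Fin 2 ⊕ Fin m) :=
  completeBipartiteGraph (Fin 2) (Fin m)

/-- Number of 0-cells of `Conf^□₃(Θ'_m)`: 3-element subsets of the vertex set. -/
noncomputable def vertCount (m : ℕ) : ℕ :=
  Nat.card {s : Finset (Fin 2 ⊕ Fin m) // s.card = 3}

/-- Number of 1-cells of `Conf^□₃(Θ'_m)`: pairs of an edge together with a 2-element
set of vertices disjoint from it. -/
noncomputable def edgeCount (m : ℕ) : ℕ :=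
  Nat.card {p : Sym2 (Fin 2 ⊕ Fin m) × Finset (Fin 2 ⊕ Fin m) //
    p.1 ∈ (thetaSub m).edgeSet ∧ p.2.card = 2 ∧ ∀ v ∈ p.2, v ∉ p.1}

/-- Number of 2-cells of `Conf^□₃(Θ'_m)`: pairs of an unordered pair of disjoint
edges together with a vertex disjoint from both. -/
noncomputable def faceCount (m : ℕ) : ℕ :=
  Nat.card {p : Finset (Sym2 (Fin 2 ⊕ Fin m)) × (Fin 2 ⊕ Fin m) //
    p.1.card = 2 ∧ (∀ e ∈ p.1, e ∈ (thetaSub m).edgeSet) ∧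
    (∀ e ∈ p.1, ∀ e' ∈ p.1, e ≠ e' → ∀ w, w ∈ e → w ∉ e') ∧
    (∀ e ∈ p.1, p.2 ∉ e)}

/-!
Each cell is counted fibrewise over its edge part: in a simple graph on `n` vertices an edge
leaves `n - 2` free vertices and a pair of disjoint edges leaves `n - 4`. In `Θ'_m = K_{2,m}`
there are `2m` edges, and a pair of disjoint edges matches `a₁, a₂` to two distinct `bᵢ`, i.e. it is
an injection `Fin 2 ↪ Fin m`. Hence `V = C(m+2, 3)`, `E = 2m·C(m, 2)`, `F = m(m-1)(m-2)`.
-/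

open Finset

theorem Nat.card_subtype_prod_eq_mul_of_fiber {ι β : Type*} [Finite ι] [Finite β] (P : ι → Prop)
    (Q : ι → β → Prop) {c : ℕ} (hQ : ∀ i, P i → Nat.card {b // Q i b} = c) :
    Nat.card {p : ι × β // P p.1 ∧ Q p.1 p.2} = Nat.card {i // P i} * c := by
  have := Fintype.ofFinite {i // P i}
  calc Nat.card {p : ι × β // P p.1 ∧ Q p.1 p.2}
      = Nat.card (Σ i : {i // P i}, {b // Q i b}) :=
        Nat.card_congr
          { toFun p := ⟨⟨p.1.1, p.2.1⟩, ⟨p.1.2, p.2.2⟩⟩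
            invFun x := ⟨(x.1, x.2), x.1.2, x.2.2⟩ }
    _ = ∑ _ : {i // P i}, c := by rw [Nat.card_sigma]; exact sum_congr rfl fun i _ => hQ i i.2
    _ = Nat.card {i // P i} * c := by simp [Nat.card_eq_fintype_card]

namespace Finset

variable {α : Type*} [Fintype α] [DecidableEq α]

theorem natCard_card_eq_and_forall_notMem (s : Finset α) (k : ℕ) :
    Nat.card {S : Finset α // S.card = k ∧ ∀ v ∈ S, v ∉ s} =
      (Fintype.card α - s.card).choose k := by
  rw [← card_compl, ← card_powersetCard, ← Nat.card_eq_finsetCard]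
  congr! 2 with S
  simp [mem_powersetCard, subset_compl_iff_disjoint_right, disjoint_left, and_comm]

theorem natCard_notMem (s : Finset α) : Nat.card {v // v ∉ s} = Fintype.card α - s.card := by
  simp [Nat.card_eq_fintype_card, Fintype.card_subtype_compl]

end Finset

namespace SimpleGraph

variable {V : Type*} (G : SimpleGraph V)

def IsDisjointEdgePair (P : Finset (Sym2 V)) : Prop :=
  P.card = 2 ∧ (∀ e ∈ P, e ∈ G.edgeSet) ∧ (∀ e ∈ P, ∀ e' ∈ P, e ≠ e' → ∀ w, w ∈ e → w ∉ e')

variable [DecidableEq V]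

variable {G} in
theorem IsDisjointEdgePair.card_biUnion_toFinset {P : Finset (Sym2 V)}
    (hP : G.IsDisjointEdgePair P) : (P.biUnion Sym2.toFinset).card = 4 := by
  obtain ⟨hcard, hedge, hdisj⟩ := hP
  obtain ⟨e, e', hne, rfl⟩ := card_eq_two.mp hcard
  have hcard_e : ∀ f ∈ ({e, e'} : Finset _), f.toFinset.card = 2 := fun f hf =>
    Sym2.card_toFinset_of_not_isDiag f (G.not_isDiag_of_mem_edgeSet (hedge f hf))
  rw [biUnion_insert, singleton_biUnion, card_union_of_disjoint, hcard_e e (by simp),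
    hcard_e e' (by simp)]
  exact Finset.disjoint_left.mpr fun w hw hw' =>
    hdisj e (by simp) e' (by simp) hne w (Sym2.mem_toFinset.mp hw) (Sym2.mem_toFinset.mp hw')

variable [Fintype V]

theorem natCard_edge_prod_avoiding_finset (k : ℕ) :
    Nat.card {p : Sym2 V × Finset V //
      p.1 ∈ G.edgeSet ∧ p.2.card = k ∧ ∀ v ∈ p.2, v ∉ p.1} =
      Nat.card G.edgeSet * (Fintype.card V - 2).choose k := by
  refine Nat.card_subtype_prod_eq_mul_of_fiber _
    (fun e (S : Finset V) => S.card = k ∧ ∀ v ∈ S, v ∉ e) fun e he => ?_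
  simp_rw [← Sym2.mem_toFinset, natCard_card_eq_and_forall_notMem,
    Sym2.card_toFinset_of_not_isDiag e (G.not_isDiag_of_mem_edgeSet he)]

theorem natCard_disjointEdgePair_prod_avoiding_vertex :
    Nat.card {p : Finset (Sym2 V) × V // G.IsDisjointEdgePair p.1 ∧ ∀ e ∈ p.1, p.2 ∉ e} =
      Nat.card {P // G.IsDisjointEdgePair P} * (Fintype.card V - 4) := by
  refine Nat.card_subtype_prod_eq_mul_of_fiber (G.IsDisjointEdgePair ·)
    (fun P v => ∀ e ∈ P, v ∉ e) fun P hP => ?_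
  have hsupp : ∀ v, (∀ e ∈ P, v ∉ e) ↔ v ∉ P.biUnion Sym2.toFinset := by simp
  simp_rw [hsupp, natCard_notMem, hP.card_biUnion_toFinset]

theorem natCard_edgeSet_completeBipartiteGraph (W₁ W₂ : Type*) :
    Nat.card (completeBipartiteGraph W₁ W₂).edgeSet = Nat.card W₁ * Nat.card W₂ := by
  rw [edgeSet_completeBipartiteGraph, Nat.card_range_of_injective, Nat.card_prod]
  rintro ⟨a, b⟩ ⟨a', b'⟩ h
  simpa using h

variable {W : Type*} [DecidableEq W]

def edgePairOfEmbedding (f : Fin 2 ↪ W) : Finset (Sym2 (Fin 2 ⊕ W)) :=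
  univ.image fun j => s(Sum.inl j, Sum.inr (f j))

theorem edgePairOfEmbedding_injective :
    Function.Injective (edgePairOfEmbedding (W := W)) := by
  intro f g h
  ext j
  have hj : s(Sum.inl j, Sum.inr (f j)) ∈ edgePairOfEmbedding g :=
    h ▸ mem_image_of_mem _ (mem_univ j)
  simpa [edgePairOfEmbedding, eq_comm] using hj

theorem isDisjointEdgePair_edgePairOfEmbedding (f : Fin 2 ↪ W) :
    (completeBipartiteGraph (Fin 2) W).IsDisjointEdgePair (edgePairOfEmbedding f) := by
  refine ⟨?_, ?_, ?_⟩
  · rw [edgePairOfEmbedding, card_image_of_injective, card_univ, Fintype.card_fin]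
    intro j j' h
    simpa using h
  · simp only [edgePairOfEmbedding, mem_image]
    rintro _ ⟨j, -, rfl⟩
    simp
  · simp only [edgePairOfEmbedding, mem_image]
    rintro _ ⟨j, -, rfl⟩ _ ⟨j', -, rfl⟩ hne
    have hj : j ≠ j' := by rintro rfl; exact hne rfl
    simpa using hj

theorem exists_edgePairOfEmbedding_eq {P : Finset (Sym2 (Fin 2 ⊕ W))}
    (hP : (completeBipartiteGraph (Fin 2) W).IsDisjointEdgePair P) :
    ∃ f, edgePairOfEmbedding f = P := by
  obtain ⟨hcard, hedge, hdisj⟩ := hP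
  obtain ⟨e, e', hne, rfl⟩ := card_eq_two.mp hcard
  obtain ⟨⟨j, i⟩, rfl⟩ : e ∈ Set.range _ := edgeSet_completeBipartiteGraph ▸ hedge e (by simp)
  obtain ⟨⟨j', i'⟩, rfl⟩ : e' ∈ Set.range _ := edgeSet_completeBipartiteGraph ▸ hedge e' (by simp)
  obtain ⟨hj, hi⟩ : j ≠ j' ∧ i ≠ i' := by simpa using hdisj _ (by simp) _ (by simp) hne
  have huniv : (univ : Finset (Fin 2)) = {j, j'} := by
    ext k; simp only [mem_univ, mem_insert, mem_singleton, true_iff]; omega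
  have hf : Function.Injective fun k => if k = j then i else i' := by
    intro k k' h
    dsimp only at h
    split_ifs at h with hk hk'
    · exact hk.trans hk'.symm
    · exact absurd h hi
    · exact absurd h.symm hi
    · omega
  refine ⟨⟨_, hf⟩, ?_⟩
  simp [edgePairOfEmbedding, huniv, hj.symm]

theorem natCard_isDisjointEdgePair_completeBipartiteGraph_fin_two [Fintype W] :
    Nat.card {P // (completeBipartiteGraph (Fin 2) W).IsDisjointEdgePair P} =
      (Fintype.card W).descFactorial 2 := by
  have hbij : Function.Bijective fun f : Fin 2 ↪ W =>
      (⟨edgePairOfEmbedding f, isDisjointEdgePair_edgePairOfEmbedding f⟩ :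
        {P // (completeBipartiteGraph (Fin 2) W).IsDisjointEdgePair P}) :=
    ⟨fun f g h => edgePairOfEmbedding_injective (congrArg Subtype.val h),
      fun P => (exists_edgePairOfEmbedding_eq P.2).imp fun _ hf => Subtype.ext hf⟩
  rw [← Nat.card_eq_of_bijective _ hbij, Nat.card_eq_fintype_card, Fintype.card_embedding_eq,
    Fintype.card_fin]

end SimpleGraph

open SimpleGraph

theorem vertCount_eq (m : ℕ) : vertCount m = (m + 2).choose 3 := by
  simp [vertCount, Nat.card_eq_fintype_card, add_comm]

theorem edgeCount_eq (m : ℕ) : edgeCount m = 2 * m * m.choose 2 := by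
  rw [edgeCount, thetaSub, natCard_edge_prod_avoiding_finset,
    natCard_edgeSet_completeBipartiteGraph]
  simp

theorem faceCount_eq (m : ℕ) : faceCount m = m.descFactorial 3 := by
  have hassoc : faceCount m = Nat.card {p : Finset (Sym2 (Fin 2 ⊕ Fin m)) × (Fin 2 ⊕ Fin m) //
      (thetaSub m).IsDisjointEdgePair p.1 ∧ ∀ e ∈ p.1, p.2 ∉ e} :=
    Nat.card_congr (Equiv.subtypeEquivRight fun _ => by simp only [IsDisjointEdgePair, and_assoc])
  rw [hassoc, natCard_disjointEdgePair_prod_avoiding_vertex, thetaSub,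
    natCard_isDisjointEdgePair_completeBipartiteGraph_fin_two, Nat.descFactorial_succ m 2]
  simp only [Fintype.card_sum, Fintype.card_fin]
  rw [mul_comm]
  congr 1
  omega

/-- The Euler characteristic of `Conf^□₃(Θ'_m)` is `m(m-2)(m-7)/6`. -/
theorem euler_char_conf3_theta (m : ℕ) :
    (6 : ℤ) * ((vertCount m : ℤ) - (edgeCount m : ℤ) + (faceCount m : ℤ)) =
      (m : ℤ) * ((m : ℤ) - 2) * ((m : ℤ) - 7) := by
  have hcast (n k : ℕ) :
      ((k.factorial * n.choose k : ℕ) : ℤ) = (descPochhammer ℤ k).eval (n : ℤ) := by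
    rw [← Nat.descFactorial_eq_factorial_mul_choose, descPochhammer_eval_eq_descFactorial]
  have hV := hcast (m + 2) 3
  have hE := hcast m 2
  have hF : ((m.descFactorial 3 : ℕ) : ℤ) = m * (m - 1) * (m - 2) := by
    rw [← descPochhammer_eval_eq_descFactorial]
    simp [descPochhammer_succ_right]
  simp [descPochhammer_succ_right, Nat.factorial] at hV hE
  rw [vertCount_eq, edgeCount_eq, faceCount_eq]
  push_cast
  linear_combination hV - 6 * (m : ℤ) * hE + 6 * hF
end

section
/- For every m ∈ ℕ, the number of pairs (P, v), where P is an unordered pair of disjoint edges of Θ'_m and v is a vertex of Θ'_m disjoint from both edges of P, equals m·(m−1)·(m−2). (This counts the 2-cells of the cube complex Conf^□_3(Θ'_m).) -/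
abbrev TripleT (m : ℕ) :=
  {t : Fin m × Fin m × Fin m // t.1 ≠ t.2.1 ∧ t.2.2 ≠ t.1 ∧ t.2.2 ≠ t.2.1}

abbrev CellT (m : ℕ) := {p : Finset (Sym2 (Fin 2 ⊕ Fin m)) × (Fin 2 ⊕ Fin m) //
      p.1.card = 2 ∧ (∀ e ∈ p.1, e ∈ (thetaSub m).edgeSet) ∧
      (∀ e ∈ p.1, ∀ e' ∈ p.1, e ≠ e' → ∀ w, w ∈ e → w ∉ e') ∧
      (∀ e ∈ p.1, p.2 ∉ e)}

def tripleEquiv (m : ℕ) : TripleT m ≃ (Fin 3 ↪ Fin m) where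
  toFun t := ⟨![t.1.1, t.1.2.1, t.1.2.2], by
    obtain ⟨⟨i, i', k⟩, h1, h2, h3⟩ := t
    intro x y hxy
    fin_cases x <;> fin_cases y <;> simp_all <;>
      first | exact h1 hxy | exact h2 hxy | exact h3 hxy
            | exact h1 hxy.symm | exact h2 hxy.symm | exact h3 hxy.symm⟩
  invFun f := ⟨(f 0, f 1, f 2), f.injective.ne (by decide), f.injective.ne (by decide),
    f.injective.ne (by decide)⟩
  left_inv t := rfl
  right_inv f := by
    ext x
    fin_cases x <;> rfl

def cellMap (m : ℕ) (t : TripleT m) : CellT m :=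
  ⟨({s(Sum.inl 0, Sum.inr t.1.1), s(Sum.inl 1, Sum.inr t.1.2.1)}, Sum.inr t.1.2.2), by
    obtain ⟨⟨i, i', k⟩, h1, h2, h3⟩ := t
    refine ⟨?_, ?_, ?_, ?_⟩
    · rw [Finset.card_pair (by simp)]
    · intro e he
      simp only [Finset.mem_insert, Finset.mem_singleton] at he
      rcases he with rfl | rfl <;> simp [thetaSub]
    · intro e he e' he' hne w hw
      simp only [Finset.mem_insert, Finset.mem_singleton] at he he'
      rcases he with rfl | rfl <;> rcases he' with rfl | rfl <;>
        simp only [Sym2.mem_iff] at hw <;> rcases hw with rfl | rfl <;> simp_all [eq_comm]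
    · intro e he
      simp only [Finset.mem_insert, Finset.mem_singleton] at he
      rcases he with rfl | rfl <;> simp_all⟩

lemma edge_form {m : ℕ} {e : Sym2 (Fin 2 ⊕ Fin m)} (h : e ∈ (thetaSub m).edgeSet) :
    ∃ j i, e = s(Sum.inl j, Sum.inr i) := by
  induction e using Sym2.ind with
  | _ x y =>
    rw [SimpleGraph.mem_edgeSet] at h
    rcases h with ⟨hx, hy⟩ | ⟨hx, hy⟩
    · obtain ⟨j, rfl⟩ := Sum.isLeft_iff.mp hx
      obtain ⟨i, rfl⟩ := Sum.isRight_iff.mp hy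
      exact ⟨j, i, rfl⟩
    · obtain ⟨i, rfl⟩ := Sum.isRight_iff.mp hx
      obtain ⟨j, rfl⟩ := Sum.isLeft_iff.mp hy
      exact ⟨j, i, Sym2.eq_swap⟩

lemma cellMap_bij (m : ℕ) : Function.Bijective (cellMap m) := by
  constructor
  · rintro ⟨⟨i, i', k⟩, h⟩ ⟨⟨j, j', l⟩, h'⟩ heq
    simp only [cellMap, Subtype.mk.injEq, Prod.mk.injEq] at heq
    obtain ⟨hs, hv⟩ := heq
    obtain rfl : k = l := Sum.inr.inj hv
    have h0 : s(Sum.inl (0 : Fin 2), Sum.inr i) ∈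
        ({s(Sum.inl (0 : Fin 2), Sum.inr j), s(Sum.inl 1, Sum.inr j')} :
          Finset (Sym2 (Fin 2 ⊕ Fin m))) := by rw [← hs]; simp
    have h1 : s(Sum.inl (1 : Fin 2), Sum.inr i') ∈
        ({s(Sum.inl (0 : Fin 2), Sum.inr j), s(Sum.inl 1, Sum.inr j')} :
          Finset (Sym2 (Fin 2 ⊕ Fin m))) := by rw [← hs]; simp
    simp only [Finset.mem_insert, Finset.mem_singleton, Sym2.eq, Sym2.rel_iff',
      Prod.mk.injEq, Prod.swap_prod_mk] at h0 h1
    simp_all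
  · rintro ⟨⟨s, v⟩, hcard, hedge, hdisj, hv⟩
    obtain ⟨e, e', hne, rfl⟩ := Finset.card_eq_two.mp hcard
    obtain ⟨j, i, rfl⟩ := edge_form (hedge e (by simp))
    obtain ⟨j', i', rfl⟩ := edge_form (hedge e' (by simp))
    have hA := hdisj _ (Finset.mem_insert_self _ _) _ (by simp) hne
    have hji : j ≠ j' := by
      intro h; exact hA (Sum.inl j) (by simp) (by simp [h])
    have hii : i ≠ i' := by
      intro h; exact hA (Sum.inr i) (by simp) (by simp [h])
    have hv1 := hv _ (Finset.mem_insert_self _ _)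
    have hv2 := hv _ (by simp : s(Sum.inl j', Sum.inr i') ∈ _)
    obtain (⟨a⟩ | ⟨k⟩) := v
    · exfalso; fin_cases a <;> fin_cases j <;> fin_cases j' <;> simp_all
    · simp only [Sym2.mem_iff] at hv1 hv2
      push_neg at hv1 hv2
      have hki : k ≠ i := fun h => hv1.2 (by rw [h])
      have hki' : k ≠ i' := fun h => hv2.2 (by rw [h])
      fin_cases j <;> fin_cases j'
      · exact absurd rfl hji
      · exact ⟨⟨(i, i', k), hii, hki, hki'⟩, rfl⟩
      · exact ⟨⟨(i', i, k), hii.symm, hki', hki⟩, by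
          simp only [cellMap, Subtype.mk.injEq, Prod.mk.injEq]
          exact ⟨Finset.pair_comm _ _, trivial⟩⟩
      · exact absurd rfl hji

/-- The number of 2-cells of `Conf^□₃(Θ'_m)` — pairs of an unordered pair of
disjoint edges of `Θ'_m` together with a vertex disjoint from both edges —
is `m(m-1)(m-2)`. -/
theorem count_two_cells_conf3_theta (m : ℕ) :
    Nat.card {p : Finset (Sym2 (Fin 2 ⊕ Fin m)) × (Fin 2 ⊕ Fin m) //
      p.1.card = 2 ∧ (∀ e ∈ p.1, e ∈ (thetaSub m).edgeSet) ∧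
      (∀ e ∈ p.1, ∀ e' ∈ p.1, e ≠ e' → ∀ w, w ∈ e → w ∉ e') ∧
      (∀ e ∈ p.1, p.2 ∉ e)} = m * (m - 1) * (m - 2) := by
  rw [← Nat.card_eq_of_bijective _ (cellMap_bij m), Nat.card_congr (tripleEquiv m),
    Nat.card_eq_fintype_card, Fintype.card_embedding_eq]
  simp [Nat.descFactorial]
  ring
end
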